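/- Let u : ℝ³ → ℂ be smooth with |u(x)| < 1 for all x, and satisfy the QP¹ submodel equations □u = 0 and ⟨∂u,∂u⟩ = 0. Fix an integer j ≥ 1 and define, for μ = 0,1,2, J_μ^{(j,0)} = i√(j(j+1)) · (ū∂_μu − u∂_μū)/(1−|u|²)^{j+1} · Σ_{n=0}^{j−1} γ̃_n^{(j,0)} |u|^{2n}, where γ̃_n^{(j,0)} = (1/j) · C(j,n) · C(j,n+1). Then (J₀^{(j,0)}, J₁^{(j,0)}, J₂^{(j,0)}) is a conserved current, i.e. ∂₀J₀^{(j,0)} − ∂₁J₁^{(j,0)} − ∂₂J₂^{(j,0)} = 0 on ℝ³. -/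

import Mathlib

open Complex ComplexConjugate Finset

/-- Partial derivative in direction `μ` of a complex-valued function on `ℝ³`. -/
noncomputable def pd (μ : Fin 3) (f : (Fin 3 → ℝ) → ℂ) (x : Fin 3 → ℝ) : ℂ :=
  fderiv ℝ f x (Pi.single μ 1)

/-- The d'Alembertian `□u = ∂₀∂₀u − ∂₁∂₁u − ∂₂∂₂u` for the metric `diag(1,−1,−1)`. -/
noncomputable def dalembert (u : (Fin 3 → ℝ) → ℂ) (x : Fin 3 → ℝ) : ℂ :=
  pd 0 (pd 0 u) x - pd 1 (pd 1 u) x - pd 2 (pd 2 u) x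

/-- Minkowski product of gradients `⟨∂f,∂g⟩ = ∂₀f·∂₀g − ∂₁f·∂₁g − ∂₂f·∂₂g`. -/
noncomputable def minkGrad (f g : (Fin 3 → ℝ) → ℂ) (x : Fin 3 → ℝ) : ℂ :=
  pd 0 f x * pd 0 g x - pd 1 f x * pd 1 g x - pd 2 f x * pd 2 g x

/-- `(J₀,J₁,J₂)` is a conserved current if `∂₀J₀ − ∂₁J₁ − ∂₂J₂ = 0` identically. -/
def IsConservedCurrent (J : Fin 3 → (Fin 3 → ℝ) → ℂ) : Prop :=
  ∀ x, pd 0 (J 0) x - pd 1 (J 1) x - pd 2 (J 2) x = 0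

/-- The coefficient `γ̃_n^{(j,0)} = (1/j) C(j,n) C(j,n+1)`. -/
noncomputable def gammaTildeCoeff (j n : ℕ) : ℂ :=
  (1 / (j : ℂ)) * (Nat.choose j n : ℂ) * (Nat.choose j (n + 1) : ℂ)

lemma contDiff_pd {f : (Fin 3 → ℝ) → ℂ} (hf : ContDiff ℝ (⊤ : ℕ∞) f) (μ : Fin 3) :
    ContDiff ℝ (⊤ : ℕ∞) (pd μ f) :=
  (hf.fderiv_right (by simp)).clm_apply contDiff_const

lemma pd_const_mul (C : ℂ) (f : (Fin 3 → ℝ) → ℂ) (x : Fin 3 → ℝ)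
    (hf : DifferentiableAt ℝ f x) (μ : Fin 3) :
    pd μ (fun y => C * f y) x = C * pd μ f x := by
  unfold pd; rw [fderiv_const_mul hf]; simp

lemma pd_mul (f g : (Fin 3 → ℝ) → ℂ) (x : Fin 3 → ℝ)
    (hf : DifferentiableAt ℝ f x) (hg : DifferentiableAt ℝ g x) (μ : Fin 3) :
    pd μ (fun y => f y * g y) x = pd μ f x * g x + f x * pd μ g x := by
  unfold pd; rw [fderiv_fun_mul hf hg]; simp; ring

lemma pd_sub (f g : (Fin 3 → ℝ) → ℂ) (x : Fin 3 → ℝ)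
    (hf : DifferentiableAt ℝ f x) (hg : DifferentiableAt ℝ g x) (μ : Fin 3) :
    pd μ (fun y => f y - g y) x = pd μ f x - pd μ g x := by
  unfold pd; rw [fderiv_fun_sub hf hg]; simp

lemma pd_conj (f : (Fin 3 → ℝ) → ℂ) (x : Fin 3 → ℝ)
    (hf : DifferentiableAt ℝ f x) (μ : Fin 3) :
    pd μ (fun y => conj (f y)) x = conj (pd μ f x) := by
  unfold pd
  have h := ((Complex.conjCLE.toContinuousLinearMap.hasFDerivAt).comp x hf.hasFDerivAt).fderiv
  rw [show (fun y => conj (f y)) = (Complex.conjCLE.toContinuousLinearMap ∘ f) from rfl, h]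
  simp

lemma pd_comp (G : ℂ → ℂ) (s : (Fin 3 → ℝ) → ℂ) (x : Fin 3 → ℝ)
    (hG : DifferentiableAt ℂ G (s x)) (hs : DifferentiableAt ℝ s x) (μ : Fin 3) :
    pd μ (fun y => G (s y)) x = deriv G (s x) * pd μ s x := by
  unfold pd
  have h := ((hG.hasDerivAt.hasFDerivAt.restrictScalars ℝ).comp x hs.hasFDerivAt).fderiv
  rw [show (fun y => G (s y)) = (G ∘ s) from rfl, h]
  simp [mul_comm]

/-- Generic conservation lemma: for any constant `C`, entire `P`, and power `k`,
the current `C ⋅ (ū∂u − u∂ū)/(1−|u|²)^k ⋅ P(|u|²)` is conserved. -/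
lemma conserved_aux (u : (Fin 3 → ℝ) → ℂ) (hu : ContDiff ℝ (⊤ : ℕ∞) u)
    (hne : ∀ x, ((1 : ℂ) - u x * conj (u x)) ≠ 0)
    (hbox : ∀ x, dalembert u x = 0) (hnull : ∀ x, minkGrad u u x = 0)
    (C : ℂ) (P : ℂ → ℂ) (hP : ∀ z, DifferentiableAt ℂ P z) (k : ℕ) :
    IsConservedCurrent (fun μ x =>
      C * ((conj (u x) * pd μ u x - u x * pd μ (fun y => conj (u y)) x) /
          (1 - u x * conj (u x)) ^ k) * P (u x * conj (u x))) := by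
  intro x
  have hud : ∀ y, DifferentiableAt ℝ u y := fun y => hu.differentiable (by simp) y
  obtain ⟨v, hvdef⟩ : ∃ v, v = fun y : Fin 3 → ℝ => conj (u y) := ⟨_, rfl⟩
  have hv : ContDiff ℝ (⊤ : ℕ∞) v := by
    rw [hvdef]; exact Complex.conjCLE.toContinuousLinearMap.contDiff.comp hu
  have hvd : ∀ y, DifferentiableAt ℝ v y := fun y => hv.differentiable (by simp) y
  have hpdv : ∀ μ : Fin 3, pd μ v = fun y => conj (pd μ u y) := by
    intro μ; funext y; rw [hvdef]; exact pd_conj u y (hud y) μ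
  obtain ⟨s, hsdef⟩ : ∃ s, s = fun y : Fin 3 → ℝ => u y * v y := ⟨_, rfl⟩
  have hsc : ContDiff ℝ (⊤ : ℕ∞) s := by rw [hsdef]; exact hu.mul hv
  have hsd : ∀ y, DifferentiableAt ℝ s y := fun y => hsc.differentiable (by simp) y
  obtain ⟨G, hGdef⟩ : ∃ G, G = fun z : ℂ => P z / (1 - z) ^ k := ⟨_, rfl⟩
  have hGd : ∀ y : Fin 3 → ℝ, DifferentiableAt ℂ G (s y) := by
    intro y
    rw [hGdef]
    refine (hP _).div (((differentiableAt_const 1).sub differentiableAt_id).pow k) ?_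
    rw [hsdef, hvdef]
    exact pow_ne_zero _ (hne y)
  have hpdu : ∀ μ : Fin 3, DifferentiableAt ℝ (pd μ u) x :=
    fun μ => (contDiff_pd hu μ).differentiable (by simp) x
  have hpdvD : ∀ μ : Fin 3, DifferentiableAt ℝ (pd μ v) x :=
    fun μ => (contDiff_pd hv μ).differentiable (by simp) x
  obtain ⟨w, hwdef⟩ : ∃ w : Fin 3 → (Fin 3 → ℝ) → ℂ,
      w = fun μ y => v y * pd μ u y - u y * pd μ v y := ⟨_, rfl⟩
  have hwd : ∀ μ : Fin 3, DifferentiableAt ℝ (w μ) x := by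
    intro μ; rw [hwdef]; exact ((hvd x).mul (hpdu μ)).sub ((hud x).mul (hpdvD μ))
  have hGsD : DifferentiableAt ℝ (fun y => G (s y)) x :=
    DifferentiableAt.comp x ((hGd x).restrictScalars ℝ) (hsd x)
  have hJ : ∀ μ : Fin 3, (fun y =>
      C * ((conj (u y) * pd μ u y - u y * pd μ (fun z => conj (u z)) y) /
          (1 - u y * conj (u y)) ^ k) * P (u y * conj (u y)))
      = fun y => C * (w μ y * G (s y)) := by
    intro μ
    funext y
    rw [hwdef, hGdef, hsdef, hvdef]
    show C * ((conj (u y) * pd μ u y - u y * pd μ (fun z => conj (u z)) y) /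
          (1 - u y * conj (u y)) ^ k) * P (u y * conj (u y))
        = C * ((conj (u y) * pd μ u y - u y * pd μ (fun z => conj (u z)) y) *
            (P (u y * conj (u y)) / (1 - u y * conj (u y)) ^ k))
    ring
  have key : ∀ μ : Fin 3, pd μ (fun y => C * (w μ y * G (s y))) x
      = C * ((pd μ (pd μ u) x * conj (u x) - conj (pd μ (pd μ u) x) * u x
              + conj (pd μ u x) * pd μ u x - pd μ u x * conj (pd μ u x)) * G (s x)
          + w μ x * (deriv G (s x) * (pd μ u x * conj (u x) + u x * conj (pd μ u x)))) := by
    intro μ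
    rw [pd_const_mul _ (fun y => w μ y * G (s y)) _ ((hwd μ).mul hGsD) μ,
        pd_mul _ _ _ (hwd μ) hGsD μ,
        pd_comp G s x (hGd x) (hsd x) μ]
    have hps : pd μ s x = pd μ u x * conj (u x) + u x * conj (pd μ u x) := by
      rw [hsdef, pd_mul u v x (hud x) (hvd x) μ, hpdv μ, hvdef]
    have hpw : pd μ (w μ) x = pd μ (pd μ u) x * conj (u x) - conj (pd μ (pd μ u) x) * u x
              + conj (pd μ u x) * pd μ u x - pd μ u x * conj (pd μ u x) := by
      rw [hwdef]
      rw [pd_sub (fun y => v y * pd μ u y) (fun y => u y * pd μ v y) x ((hvd x).mul (hpdu μ)) ((hud x).mul (hpdvD μ)) μ,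
          pd_mul v (pd μ u) x (hvd x) (hpdu μ) μ,
          pd_mul u (pd μ v) x (hud x) (hpdvD μ) μ,
          hpdv μ, pd_conj (pd μ u) x (hpdu μ) μ, hvdef]
      show conj (pd μ u x) * pd μ u x + conj (u x) * pd μ (pd μ u) x
          - (pd μ u x * conj (pd μ u x) + u x * conj (pd μ (pd μ u) x)) = _
      ring
    rw [hps, hpw]
  have hB := hbox x
  have hN := hnull x
  unfold dalembert at hB
  unfold minkGrad at hN
  have hB' := congrArg (starRingEnd ℂ) hB
  have hN' := congrArg (starRingEnd ℂ) hN
  simp only [map_sub, map_mul, map_zero] at hB' hN'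
  have hwx : ∀ μ : Fin 3, w μ x = conj (u x) * pd μ u x - u x * conj (pd μ u x) := by
    intro μ; rw [hwdef]; show v x * pd μ u x - u x * pd μ v x = _
    rw [hpdv μ, hvdef]
  simp only [hJ 0, hJ 1, hJ 2]
  rw [key 0, key 1, key 2, hwx 0, hwx 1, hwx 2]
  linear_combination (C * G (s x) * conj (u x)) * hB - (C * G (s x) * u x) * hB'
    + (C * deriv G (s x) * conj (u x) ^ 2) * hN - (C * deriv G (s x) * (u x) ^ 2) * hN'

/-- For a solution of the `QP¹` submodel `□u = 0`, `⟨∂u,∂u⟩ = 0` with values in the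
unit disk, the current `J_μ^{(j,0)}` is conserved for all `j ≥ 1`. -/
theorem qp1_submodel_Jj0_conserved (u : (Fin 3 → ℝ) → ℂ) (hu : ContDiff ℝ (⊤ : ℕ∞) u)
    (hdisk : ∀ x, ‖u x‖ < 1)
    (hbox : ∀ x, dalembert u x = 0) (hnull : ∀ x, minkGrad u u x = 0)
    (j : ℕ) (hj : 1 ≤ j) :
    IsConservedCurrent (fun μ x =>
      Complex.I * (Real.sqrt ((j : ℝ) * ((j : ℝ) + 1)) : ℂ) *
        ((conj (u x) * pd μ u x - u x * pd μ (fun y => conj (u y)) x) /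
          (1 - u x * conj (u x)) ^ (j + 1)) *
        ∑ n ∈ Finset.range j, gammaTildeCoeff j n * (u x * conj (u x)) ^ n) := by
  have hne : ∀ x, ((1 : ℂ) - u x * conj (u x)) ≠ 0 := by
    intro x h
    have h1 : u x * conj (u x) = 1 := by linear_combination -h
    have := congrArg norm h1
    rw [norm_mul, Complex.norm_conj, norm_one] at this
    nlinarith [hdisk x, norm_nonneg (u x)]
  have hP : ∀ z : ℂ, DifferentiableAt ℂ
      (fun z => ∑ n ∈ Finset.range j, gammaTildeCoeff j n * z ^ n) z := by
    intro z
    exact DifferentiableAt.fun_sum fun n _ => (differentiableAt_pow n).const_mul _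
  exact conserved_aux u hu hne hbox hnull
    (Complex.I * (Real.sqrt ((j : ℝ) * ((j : ℝ) + 1)) : ℂ))
    (fun z => ∑ n ∈ Finset.range j, gammaTildeCoeff j n * z ^ n) hP (j + 1)
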